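/- Let K be a connected multigraph with a distinguished n-element subset U of its vertices (n ≥ 1), let A ∈ Γ(U), and let x be a real number. Then T(K/A;x,1) = Σ_{B ∈ Γ(U)} δ · (x−1)^{|A∧B|−1} · T_B(K;x,1), where δ = 1 if |A∧B| + n = |A| + |B| and δ = 0 otherwise. -/

import Mathlib

attribute [local instance] Classical.propDecidable

/-- A multigraph: a finite vertex type, a finite edge index type, and an endpoint
map sending each edge to an unordered pair of vertices. -/
structure Multigraph where
  V : Type
  E : Type
  [finV : Fintype V]
  [finE : Fintype E]
  ends : E → Sym2 V

attribute [instance] Multigraph.finV Multigraph.finE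

namespace Multigraph

/-- Two vertices are related if some edge of `S` has them as its endpoints. -/
def rel (G : Multigraph) (S : Finset G.E) (v w : G.V) : Prop :=
  ∃ e ∈ S, G.ends e = s(v, w)

/-- `ω(S)`: the number of connected components of the spanning subgraph `(V(G), S)`. -/
noncomputable def omega (G : Multigraph) (S : Finset G.E) : ℕ :=
  Nat.card (Quotient (Relation.EqvGen.setoid (G.rel S)))

/-- `ω(G)`: the number of connected components of `G`. -/
noncomputable def omegaG (G : Multigraph) : ℕ :=
  G.omega Finset.univ

/-- The Negami polynomial `f(G;t,x,y)`. -/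
noncomputable def negami (G : Multigraph) (t x y : ℝ) : ℝ :=
  ∑ S : Finset G.E, t ^ G.omega S * x ^ S.card * y ^ (Fintype.card G.E - S.card)

/-- The Tutte polynomial `T(G;x,y)`. -/
noncomputable def tutte (G : Multigraph) (x y : ℝ) : ℝ :=
  ∑ S : Finset G.E,
    (x - 1) ^ (G.omega S - G.omegaG) *
      (y - 1) ^ (G.omega S + S.card - Fintype.card G.V)

end Multigraph

/-- The setoid on `V` extending a setoid `A` on the subset `U`: its nontrivial
classes are exactly the blocks of `A`. -/
def extendSetoid {V : Type} (U : Set V) (A : Setoid U) : Setoid V where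
  r v w := v = w ∨ ∃ (hv : v ∈ U) (hw : w ∈ U), A.r ⟨v, hv⟩ ⟨w, hw⟩
  iseqv := by
    constructor
    · exact fun v => Or.inl rfl
    · rintro v w (rfl | ⟨hv, hw, h⟩)
      · exact Or.inl rfl
      · exact Or.inr ⟨hw, hv, A.symm h⟩
    · rintro v w z (rfl | ⟨hv, hw, h⟩) (rfl | ⟨hw', hz, h'⟩)
      · exact Or.inl rfl
      · exact Or.inr ⟨hw', hz, h'⟩
      · exact Or.inr ⟨hv, hw, h⟩
      · exact Or.inr ⟨hv, hz, A.trans h h'⟩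

namespace Multigraph

/-- The contraction `K/A` of a multigraph `K` by a partition `A` of a subset `U` of
its vertices: all vertices in a common block of `A` are identified. -/
noncomputable def contract (K : Multigraph) {U : Set K.V} (A : Setoid U) : Multigraph where
  V := Quotient (extendSetoid U A)
  E := K.E
  finV := Fintype.ofFinite _
  finE := K.finE
  ends e := (K.ends e).map (Quotient.mk (extendSetoid U A))

/-- `P(S)`: the partition of `U` in which two vertices lie in the same block iff they
lie in the same connected component of the spanning subgraph `(V(K), S)`. -/
def part (K : Multigraph) (U : Set K.V) (S : Finset K.E) : Setoid U :=
  Setoid.comap Subtype.val (Relation.EqvGen.setoid (K.rel S))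

/-- The auxiliary Negami polynomial `f_A(K;t,x,y)`. -/
noncomputable def negamiAux (K : Multigraph) (U : Set K.V) (A : Setoid U) (t x y : ℝ) : ℝ :=
  ∑ S : Finset K.E,
    if K.part U S = A then
      t ^ (K.omega S - Nat.card (Quotient A)) * x ^ S.card *
        y ^ (Fintype.card K.E - S.card)
    else 0

/-- The auxiliary Tutte polynomial `T_A(K;x,y)`. -/
noncomputable def tutteAux (K : Multigraph) (U : Set K.V) (A : Setoid U) (x y : ℝ) : ℝ :=
  ∑ S : Finset K.E,
    if K.part U S = A then
      (x - 1) ^ (K.omega S - Nat.card (Quotient A)) *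
        (y - 1) ^ (K.omega S + S.card - Fintype.card K.V)
    else 0

end Multigraph

/-- The set of partitions of a finite type is finite. -/
instance setoidFinite {α : Type} [Finite α] : Finite (Setoid α) :=
  Finite.of_injective (fun s : Setoid α => s.r) fun a b h => by
    cases a; cases b; simp only at h; subst h; rfl

noncomputable instance setoidFintype {α : Type} [Finite α] : Fintype (Setoid α) :=
  Fintype.ofFinite _

/-- The number of blocks `|A|` of a partition (setoid) `A`. -/
noncomputable def nblocks {α : Type} (A : Setoid α) : ℕ :=
  Nat.card (Quotient A)

/-- The matrix `T_n(t)` indexed by partitions of `α`, with `(A,B)`-entry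
`t^{|A∧B|}` where `A∧B` is the finest common coarsening (the join `A ⊔ B`). -/
noncomputable def Tmat (α : Type) [Finite α] (t : ℝ) :
    Matrix (Setoid α) (Setoid α) ℝ :=
  Matrix.of fun A B => t ^ nblocks (A ⊔ B)

/-- The matrix `L_n(x)` indexed by partitions of `α`, with `(A,B)`-entry
`(x-1)^{|A∧B|-1}` if `|A∧B| + n = |A| + |B|` and `0` otherwise. -/
noncomputable def Lmat (α : Type) [Finite α] (n : ℕ) (x : ℝ) :
    Matrix (Setoid α) (Setoid α) ℝ :=
  Matrix.of fun A B =>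
    if nblocks (A ⊔ B) + n = nblocks A + nblocks B then
      (x - 1) ^ (nblocks (A ⊔ B) - 1)
    else 0

/-- The connectivity matrix `A_n` indexed by partitions of `α`, with `(A,B)`-entry
`1` if `|A∧B| = 1` and `0` otherwise. -/
noncomputable def Amat (α : Type) [Finite α] :
    Matrix (Setoid α) (Setoid α) ℝ :=
  Matrix.of fun A B => if nblocks (A ⊔ B) = 1 then (1 : ℝ) else 0

/-- `G` is an `n`-sum of `K` and `H` along `U`: `V(G) = V(K) ∪ V(H)`,
`V(K) ∩ V(H) = U`, and `E(G)` is the disjoint union of `E(K)` and `E(H)` with the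
inherited endpoint maps. -/
structure NSum (G K H : Multigraph) (U : Set G.V) where
  ιK : K.V → G.V
  ιH : H.V → G.V
  injK : Function.Injective ιK
  injH : Function.Injective ιH
  cover : Set.range ιK ∪ Set.range ιH = Set.univ
  inter : Set.range ιK ∩ Set.range ιH = U
  edgeEquiv : G.E ≃ K.E ⊕ H.E
  endsK : ∀ a, G.ends (edgeEquiv.symm (Sum.inl a)) = (K.ends a).map ιK
  endsH : ∀ a, G.ends (edgeEquiv.symm (Sum.inr a)) = (H.ends a).map ιH

namespace NSum

variable {G K H : Multigraph} {U : Set G.V}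

/-- The copy of a partition `A` of `U` on the corresponding subset of `V(K)`. -/
def pullK (σ : NSum G K H U) (A : Setoid U) : Setoid (σ.ιK ⁻¹' U : Set K.V) :=
  Setoid.comap (fun v => ⟨σ.ιK v.1, v.2⟩) A

/-- The copy of a partition `A` of `U` on the corresponding subset of `V(H)`. -/
def pullH (σ : NSum G K H U) (A : Setoid U) : Setoid (σ.ιH ⁻¹' U : Set H.V) :=
  Setoid.comap (fun v => ⟨σ.ιH v.1, v.2⟩) A

/-- The contraction `K/A` for a partition `A` of the common vertex set `U`. -/
noncomputable def contractK (σ : NSum G K H U) (A : Setoid U) : Multigraph :=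
  K.contract (σ.pullK A)

/-- The contraction `H/B` for a partition `B` of the common vertex set `U`. -/
noncomputable def contractH (σ : NSum G K H U) (B : Setoid U) : Multigraph :=
  H.contract (σ.pullH B)

end NSum

/-!
At `y = 1` only the edge sets `S` of nullity `ω(S) + |S| - |V|` zero contribute to a Tutte
polynomial. Fix `S` and put `B = P(S)`. Identifying the blocks of `A` merges the components of
`(V(K), S)` that meet `U` according to the join `A ⊔ B` (the paper's `A ∧ B`) and leaves the
others alone, so `ω_{K/A}(S) = ω(S) + |A ⊔ B| - |B|`, while `|V(K/A)| = |V(K)| + |A| - n`.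
Hence the nullity of `S` in `K/A` is its nullity in `K` plus the defect
`|A ⊔ B| + n - |A| - |B|`, which is nonnegative, and the exponent of `x - 1` splits as
`(|A ⊔ B| - 1) + (ω(S) - |B|)`. Grouping the edge sets by `P(S)` gives the expansion.
-/

open Relation

namespace Setoid

variable {α β : Type*}

lemma card_quotient_le_of_le [Finite α] {r s : Setoid α} (h : r ≤ s) :
    Nat.card (Quotient s) ≤ Nat.card (Quotient r) :=
  Nat.card_le_card_of_surjective (map_of_le h) (Quotient.ind fun a => ⟨Quotient.mk r a, rfl⟩)

lemma card_quotient_comap_le [Finite β] (f : α → β) (r : Setoid β) :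
    Nat.card (Quotient (r.comap f)) ≤ Nat.card (Quotient r) :=
  (Nat.card_congr (comapQuotientEquiv f r)).trans_le
    (Nat.card_le_card_of_injective Subtype.val Subtype.val_injective)

lemma card_quotient_comap_of_surjective {f : α → β} (hf : f.Surjective) (r : Setoid β) :
    Nat.card (Quotient (r.comap f)) = Nat.card (Quotient r) :=
  Nat.card_congr <| (comapQuotientEquiv f r).trans <|
    Equiv.subtypeUnivEquiv (Quotient.mk''_surjective.comp hf)

lemma card_quotient_bot : Nat.card (Quotient (⊥ : Setoid α)) = Nat.card α :=
  Nat.card_congr quotientBotEquiv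

lemma card_quotient_top [Nonempty α] : Nat.card (Quotient (⊤ : Setoid α)) = 1 :=
  Nat.card_eq_one_iff_unique.2
    ⟨⟨Quotient.ind₂ fun _ _ => Quotient.sound trivial⟩, ⟨Quotient.mk _ (Classical.arbitrary α)⟩⟩

lemma card_quotient_eq_card_comap_add [Finite α] (r : Setoid α) (U : Set α) :
    Nat.card (Quotient r) = Nat.card (Quotient (r.comap (Subtype.val : U → α))) +
      Nat.card ↥(Set.range (Quotient.mk'' ∘ (Subtype.val : U → α)) : Set (Quotient r))ᶜ := by
  rw [Nat.card_congr (comapQuotientEquiv (Subtype.val : U → α) r), ← Nat.card_sum]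
  exact Nat.card_congr (Equiv.Set.sumCompl _).symm

end Setoid

section extendSetoid

variable {V : Type} {U : Set V} (R : Setoid V) (A : Setoid U)

lemma sup_extendSetoid_cases {v w : V} (h : (R ⊔ extendSetoid U A) v w) :
    R v w ∨ ∃ u₁ u₂ : U, R v u₁ ∧ R w u₂ ∧ (A ⊔ R.comap Subtype.val) u₁ u₂ := by
  set J := A ⊔ R.comap Subtype.val
  rw [Setoid.sup_eq_eqvGen] at h
  induction h with
  | rel v w h =>
    rcases h with h | rfl | ⟨hv, hw, h⟩
    · exact Or.inl h
    · exact Or.inl (R.refl v)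
    · exact Or.inr ⟨⟨v, hv⟩, ⟨w, hw⟩, R.refl v, R.refl w, (le_sup_left : A ≤ J) h⟩
  | refl v => exact Or.inl (R.refl v)
  | symm v w _ ih =>
    rcases ih with h | ⟨u₁, u₂, h₁, h₂, hJ⟩
    · exact Or.inl (R.symm h)
    · exact Or.inr ⟨u₂, u₁, h₂, h₁, J.symm hJ⟩
  | trans v w z _ _ ih₁ ih₂ =>
    rcases ih₁ with h | ⟨u₁, u₂, h₁, h₂, hJ⟩ <;> rcases ih₂ with g | ⟨u₃, u₄, g₁, g₂, gJ⟩
    · exact Or.inl (R.trans h g)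
    · exact Or.inr ⟨u₃, u₄, R.trans h g₁, g₂, gJ⟩
    · exact Or.inr ⟨u₁, u₂, h₁, R.trans (R.symm g) h₂, hJ⟩
    · have h₂₃ : J u₂ u₃ := (le_sup_right : R.comap Subtype.val ≤ J) (R.trans (R.symm h₂) g₁)
      exact Or.inr ⟨u₁, u₄, h₁, g₂, J.trans hJ (J.trans h₂₃ gJ)⟩

lemma comap_sup_extendSetoid :
    (R ⊔ extendSetoid U A).comap Subtype.val = A ⊔ R.comap Subtype.val := by
  set J := A ⊔ R.comap Subtype.val
  refine le_antisymm (fun u₁ u₂ h => ?_) (sup_le ?_ ?_)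
  · have hR : R.comap Subtype.val ≤ J := le_sup_right
    rcases sup_extendSetoid_cases R A h with h | ⟨u₃, u₄, h₁, h₂, hJ⟩
    · exact hR h
    · exact J.trans (hR h₁) (J.trans hJ (hR (R.symm h₂)))
  · exact fun u₁ u₂ h => (le_sup_right : extendSetoid U A ≤ _) (Or.inr ⟨u₁.2, u₂.2, h⟩)
  · exact fun u₁ u₂ h => (le_sup_left : R ≤ _) h

/-- Joining the blocks of `A` leaves the classes of `R` that avoid `U` untouched, and merges the
classes meeting `U` according to `A ⊔ R|_U`. -/
lemma card_quotient_sup_extendSetoid [Finite V] :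
    Nat.card (Quotient (R ⊔ extendSetoid U A)) +
        Nat.card (Quotient (R.comap (Subtype.val : U → V))) =
      Nat.card (Quotient R) + Nat.card (Quotient (A ⊔ R.comap Subtype.val)) := by
  set R' := R ⊔ extendSetoid U A
  let D : Set (Quotient R) := Set.range (Quotient.mk'' ∘ (Subtype.val : U → V))
  let D' : Set (Quotient R') := Set.range (Quotient.mk'' ∘ (Subtype.val : U → V))
  have hbij : Set.BijOn (Setoid.map_of_le (le_sup_left : R ≤ R')) Dᶜ D'ᶜ := by
    refine ⟨?_, ?_, ?_⟩
    · rintro ⟨v⟩ hv ⟨u, hu⟩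
      rcases sup_extendSetoid_cases R A (Quotient.exact hu) with h | ⟨-, u₂, -, h₂, -⟩
      · exact hv ⟨u, Quotient.sound h⟩
      · exact hv ⟨u₂, Quotient.sound (R.symm h₂)⟩
    · rintro ⟨v⟩ hv ⟨w⟩ - h
      rcases sup_extendSetoid_cases R A (Quotient.exact h) with h | ⟨u₁, -, h₁, -, -⟩
      · exact Quotient.sound h
      · exact absurd ⟨u₁, Quotient.sound (R.symm h₁)⟩ hv
    · rintro ⟨v⟩ hv
      refine ⟨Quotient.mk R v, fun ⟨u, hu⟩ => hv ⟨u, ?_⟩, rfl⟩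
      exact congrArg (Setoid.map_of_le le_sup_left) hu
  rw [R.card_quotient_eq_card_comap_add U, R'.card_quotient_eq_card_comap_add U,
    comap_sup_extendSetoid, Nat.card_congr (hbij.equiv _)]
  ring

end extendSetoid

namespace Multigraph

abbrev conn (G : Multigraph) (S : Finset G.E) : Setoid G.V :=
  EqvGen.setoid (G.rel S)

section

variable (G : Multigraph)

lemma omega_eq_card_quotient_conn (S : Finset G.E) : G.omega S = Nat.card (Quotient (G.conn S)) :=
  rfl

lemma conn_empty : G.conn ∅ = ⊥ :=
  le_bot_iff.1 <| Setoid.eqvGen_le fun _ _ ⟨_, he, _⟩ => absurd he (Finset.notMem_empty _)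

lemma conn_insert (S : Finset G.E) {e : G.E} {a b : G.V} (hab : G.ends e = s(a, b)) :
    G.conn (insert e S) = G.conn S ⊔ extendSetoid {a, b} ⊤ := by
  refine le_antisymm (Setoid.eqvGen_le ?_) (sup_le ?_ ?_)
  · rintro v w ⟨f, hf, hvw⟩
    rcases Finset.mem_insert.1 hf with rfl | hf
    · have hvw : s(v, w) = s(a, b) := hvw.symm.trans hab
      have hv : v ∈ ({a, b} : Set G.V) := Sym2.mem_iff.1 (hvw ▸ Sym2.mem_mk_left v w)
      have hw : w ∈ ({a, b} : Set G.V) := Sym2.mem_iff.1 (hvw ▸ Sym2.mem_mk_right v w)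
      exact (le_sup_right : extendSetoid _ ⊤ ≤ _) (Or.inr ⟨hv, hw, trivial⟩)
    · exact (le_sup_left : G.conn S ≤ _) (EqvGen.rel _ _ ⟨f, hf, hvw⟩)
  · exact Setoid.eqvGen_mono fun v w ⟨f, hf, hvw⟩ => ⟨f, Finset.mem_insert_of_mem hf, hvw⟩
  · have hedge : G.conn (insert e S) a b := EqvGen.rel _ _ ⟨e, Finset.mem_insert_self e S, hab⟩
    rintro v w (rfl | ⟨hv, hw, -⟩)
    · exact EqvGen.refl v
    · rcases hv with rfl | rfl <;> rcases hw with rfl | rfl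
      exacts [EqvGen.refl _, hedge, EqvGen.symm _ _ hedge, EqvGen.refl _]

lemma omega_le_omega_insert_add_one (S : Finset G.E) (e : G.E) :
    G.omega S ≤ G.omega (insert e S) + 1 := by
  obtain ⟨a, b, he⟩ : ∃ a b, G.ends e = s(a, b) := Sym2.exists.1 ⟨_, rfl⟩
  have : Nonempty ({a, b} : Set G.V) := ⟨⟨a, Set.mem_insert a _⟩⟩
  have hcard := card_quotient_sup_extendSetoid (G.conn S) (⊤ : Setoid ({a, b} : Set G.V))
  rw [top_sup_eq, Setoid.card_quotient_top] at hcard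
  have hpair : Nat.card (Quotient ((G.conn S).comap (Subtype.val : ({a, b} : Set G.V) → _))) ≤ 2 :=
    (Nat.card_le_card_of_surjective _ Quotient.mk_surjective).trans <|
      (Nat.card_coe_set_eq _).trans_le <| (Set.ncard_insert_le a {b}).trans (by simp)
  rw [omega_eq_card_quotient_conn, omega_eq_card_quotient_conn, conn_insert G S he]
  omega

lemma card_V_le_omega_add_card (S : Finset G.E) : Fintype.card G.V ≤ G.omega S + S.card := by
  induction S using Finset.induction_on with
  | empty =>
    rw [omega_eq_card_quotient_conn, conn_empty, Setoid.card_quotient_bot, Nat.card_eq_fintype_card]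
    simp
  | insert e S he ih =>
    rw [Finset.card_insert_of_notMem he]
    have hstep := G.omega_le_omega_insert_add_one S e
    omega

end

section contract

variable (K : Multigraph) {U : Set K.V} (A : Setoid U)

lemma comap_conn_contract (S : Finset K.E) :
    ((K.contract A).conn S).comap (Quotient.mk (extendSetoid U A)) =
      K.conn S ⊔ extendSetoid U A := by
  refine le_antisymm (fun v w h => ?_) (sup_le ?_ ?_)
  · let g : Quotient (extendSetoid U A) → Quotient (K.conn S ⊔ extendSetoid U A) :=
      Setoid.map_of_le le_sup_right
    have hg : (K.contract A).conn S ≤ Setoid.ker g := by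
      refine Setoid.eqvGen_le fun p q ⟨f, hf, hpq⟩ => ?_
      obtain ⟨c, d, hcd⟩ : ∃ c d, K.ends f = s(c, d) := Sym2.exists.1 ⟨_, rfl⟩
      have hcd' : g (Quotient.mk _ c) = g (Quotient.mk _ d) :=
        Quotient.sound ((le_sup_left : K.conn S ≤ _) (EqvGen.rel _ _ ⟨f, hf, hcd⟩))
      have hpq : s(Quotient.mk _ c, Quotient.mk _ d) = s(p, q) := by
        rw [← hpq]; simp [contract, hcd]
      rcases Sym2.eq_iff.1 hpq with ⟨rfl, rfl⟩ | ⟨rfl, rfl⟩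
      exacts [hcd', hcd'.symm]
    exact Quotient.exact (hg h)
  · refine Setoid.eqvGen_le fun v w ⟨f, hf, hvw⟩ => EqvGen.rel _ _ ⟨f, hf, ?_⟩
    simp [contract, hvw]
  · intro v w h
    show (K.contract A).conn S (Quotient.mk _ v) (Quotient.mk _ w)
    rw [Quotient.sound h]
    exact EqvGen.refl _

lemma omega_contract (S : Finset K.E) :
    (K.contract A).omega S = Nat.card (Quotient (K.conn S ⊔ extendSetoid U A)) := by
  rw [← comap_conn_contract]
  exact (Setoid.card_quotient_comap_of_surjective Quotient.mk_surjective _).symm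

lemma omega_contract_le (S : Finset K.E) : (K.contract A).omega S ≤ K.omega S := by
  rw [omega_contract]
  exact Setoid.card_quotient_le_of_le le_sup_left

lemma omegaG_contract_eq_one (hK : K.omegaG = 1) [Nonempty U] : (K.contract A).omegaG = 1 := by
  have hle : (K.contract A).omegaG ≤ K.omegaG := K.omega_contract_le A Finset.univ
  have hpos : 0 < (K.contract A).omegaG :=
    Nat.card_pos_iff.2 ⟨⟨Quotient.mk _ (Quotient.mk _ (Classical.arbitrary U).1)⟩, inferInstance⟩
  omega

lemma omega_contract_add_nblocks_part (S : Finset K.E) :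
    (K.contract A).omega S + nblocks (K.part U S) = K.omega S + nblocks (A ⊔ K.part U S) := by
  rw [omega_contract]
  exact card_quotient_sup_extendSetoid (K.conn S) A

lemma card_V_contract_add_card :
    Fintype.card (K.contract A).V + Nat.card U = Fintype.card K.V + nblocks A := by
  have hbot : (⊥ : Setoid K.V).comap (Subtype.val : U → K.V) = ⊥ :=
    Setoid.ext fun _ _ => Subtype.ext_iff.symm
  have := card_quotient_sup_extendSetoid (⊥ : Setoid K.V) A
  rw [bot_sup_eq, hbot, sup_bot_eq, Setoid.card_quotient_bot, Setoid.card_quotient_bot] at this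
  rw [← Nat.card_eq_fintype_card, ← Nat.card_eq_fintype_card]
  exact this

lemma nblocks_part_le_omega (S : Finset K.E) : nblocks (K.part U S) ≤ K.omega S :=
  Setoid.card_quotient_comap_le _ _

end contract

end Multigraph

lemma one_le_nblocks {α : Type} [Finite α] [Nonempty α] (A : Setoid α) : 1 ≤ nblocks A :=
  Nat.card_pos_iff.2 ⟨⟨Quotient.mk A (Classical.arbitrary α)⟩, inferInstance⟩

section blockGraph

variable {α : Type} [Finite α] (A B : Setoid α)

noncomputable def blockGraph : Multigraph where
  V := Quotient A ⊕ Quotient B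
  E := α
  finV := Fintype.ofFinite _
  finE := Fintype.ofFinite _
  ends u := s(Sum.inl (Quotient.mk A u), Sum.inr (Quotient.mk B u))

lemma omega_blockGraph_le : (blockGraph A B).omega Finset.univ ≤ nblocks (A ⊔ B) := by
  let C := (blockGraph A B).conn Finset.univ
  have hedge (u : α) : C (Sum.inl (Quotient.mk A u)) (Sum.inr (Quotient.mk B u)) :=
    EqvGen.rel _ _ ⟨u, Finset.mem_univ _, rfl⟩
  let f (u : α) : Quotient C := Quotient.mk C (Sum.inl (Quotient.mk A u))
  have hf : A ⊔ B ≤ Setoid.ker f := by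
    refine sup_le (fun u v h => ?_) (fun u v h => Quotient.sound ?_)
    · exact congrArg (fun q => Quotient.mk C (Sum.inl q)) (Quotient.sound h)
    · refine C.trans (hedge u) ?_
      rw [Quotient.sound h]
      exact C.symm (hedge v)
  refine Nat.card_le_card_of_surjective (Quotient.lift f hf) (Quotient.ind ?_)
  rintro (p | p) <;> obtain ⟨u, rfl⟩ := Quotient.mk_surjective p
  exacts [⟨Quotient.mk _ u, rfl⟩, ⟨Quotient.mk _ u, Quotient.sound (hedge u)⟩]

lemma nblocks_add_nblocks_le_nblocks_sup_add :
    nblocks A + nblocks B ≤ nblocks (A ⊔ B) + Nat.card α := by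
  have hcard := (blockGraph A B).card_V_le_omega_add_card Finset.univ
  rw [Finset.card_univ, Fintype.card_eq_nat_card, Fintype.card_eq_nat_card] at hcard
  have hω := omega_blockGraph_le A B
  have hV : Nat.card (blockGraph A B).V = nblocks A + nblocks B := Nat.card_sum
  have hE : Nat.card (blockGraph A B).E = Nat.card α := rfl
  omega

end blockGraph

namespace Multigraph

variable (K : Multigraph) {U : Set K.V} (A : Setoid U)

lemma contract_tutte_summand_at_one (hK : K.omegaG = 1) [Nonempty U] (S : Finset K.E) (x : ℝ) :
    (x - 1) ^ ((K.contract A).omega S - (K.contract A).omegaG) *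
        (1 - 1 : ℝ) ^ ((K.contract A).omega S + S.card - Fintype.card (K.contract A).V) =
      (if nblocks (A ⊔ K.part U S) + Nat.card U = nblocks A + nblocks (K.part U S) then 1 else 0) *
        (x - 1) ^ (nblocks (A ⊔ K.part U S) - 1) *
        ((x - 1) ^ (K.omega S - nblocks (K.part U S)) *
          (1 - 1 : ℝ) ^ (K.omega S + S.card - Fintype.card K.V)) := by
  have hω := K.omega_contract_add_nblocks_part A S
  have hV := K.card_V_contract_add_card A
  have hnull := K.card_V_le_omega_add_card S
  have hnull' := (K.contract A).card_V_le_omega_add_card S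
  have hB := K.nblocks_part_le_omega (U := U) S
  have hjoin := one_le_nblocks (A ⊔ K.part U S)
  have hdefect := nblocks_add_nblocks_le_nblocks_sup_add A (K.part U S)
  rw [K.omegaG_contract_eq_one A hK, sub_self]
  generalize K.part U S = B at hω hB hjoin hdefect ⊢
  have hexp : (K.contract A).omega S - 1 = (nblocks (A ⊔ B) - 1) + (K.omega S - nblocks B) := by
    omega
  have hnullity : (K.contract A).omega S + S.card - Fintype.card (K.contract A).V =
      (K.omega S + S.card - Fintype.card K.V) +
        (nblocks (A ⊔ B) + Nat.card U - (nblocks A + nblocks B)) := by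
    omega
  have hdefect_eq_zero :
      nblocks (A ⊔ B) + Nat.card U - (nblocks A + nblocks B) = 0 ↔
        nblocks (A ⊔ B) + Nat.card U = nblocks A + nblocks B := by
    omega
  rw [hexp, hnullity, pow_add, pow_add,
    zero_pow_eq (nblocks (A ⊔ B) + Nat.card U - (nblocks A + nblocks B)),
    if_congr hdefect_eq_zero rfl rfl]
  split_ifs <;> ring

end Multigraph

/-- `T(K/A;x,1) = Σ_{B ∈ Γ(U)} δ · (x−1)^{|A∧B|−1} · T_B(K;x,1)` where
`δ = 1` iff `|A∧B| + n = |A| + |B|`. -/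
theorem tutte_contract_expansion
    (K : Multigraph) (U : Set K.V) (n : ℕ) (hn : 1 ≤ n) (hU : Nat.card ↥U = n)
    (hK : K.omegaG = 1) (A : Setoid ↥U) (x : ℝ) :
    (K.contract A).tutte x 1 =
      ∑ B : Setoid ↥U,
        (if nblocks (A ⊔ B) + n = nblocks A + nblocks B then (1 : ℝ) else 0) *
          (x - 1) ^ (nblocks (A ⊔ B) - 1) * K.tutteAux U B x 1 := by
  subst hU
  have : Nonempty U := (Nat.card_pos_iff.1 hn).1
  simp only [Multigraph.tutteAux, Finset.mul_sum, mul_ite, mul_zero]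
  rw [Finset.sum_comm]
  simp only [Finset.sum_ite_eq, Finset.mem_univ, if_true]
  exact Finset.sum_congr rfl fun S _ => K.contract_tutte_summand_at_one A hK S x
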